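/- Let F, H be unsatisfiable formulas over disjoint variable sets with n and m variables respectively, and let T be an optimal backtracking search tree of F · H whose root is labeled by a variable x of H. Then T can be transformed, without changing its size, into a search tree of F · H in which a single optimal BST of F appears at the top and all branching on H-variables occurs below it. -/
import Mathlib


/-- Propositional variables. -/
abbrev Var := ℕ
/-- A literal is a variable together with a sign. -/
abbrev Lit := Var × Bool
/-- A clause is a set of literals. -/
abbrev Clause := Set Lit
/-- A CNF formula is a set of clauses. -/
abbrev CNF := Set Clause

/-- The variables occurring in a clause. -/
def Clause.vars (C : Clause) : Set Var := {v | ∃ b, (v, b) ∈ C}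

/-- The variables occurring in a formula. -/
def CNF.vars (F : CNF) : Set Var := ⋃ C ∈ F, Clause.vars C

/-- An assignment satisfies a formula if every clause contains a true literal. -/
def Satisfies (a : Var → Bool) (F : CNF) : Prop := ∀ C ∈ F, ∃ l ∈ C, a l.1 = l.2

/-- A formula is satisfiable. -/
def Sat (F : CNF) : Prop := ∃ a, Satisfies a F

/-- Simplification of `F` under the assignment of value `b` to variable `x`:
clauses containing the satisfied literal are removed, and the falsified literal
is deleted from the remaining clauses. -/
def restrict (F : CNF) (x : Var) (b : Bool) : CNF :=
  {C' | ∃ C ∈ F, (x, b) ∉ C ∧ C' = {l ∈ C | l.1 ≠ x}}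

/-- Binary trees with variable-labelled nodes. -/
inductive BTree where
  | nil : BTree
  | node : Var → BTree → BTree → BTree

/-- Number of nodes of a tree. -/
def BTree.size : BTree → ℕ
  | .nil => 0
  | .node _ l r => l.size + r.size + 1

/-- Backtracking search trees (BST) of a formula: the empty tree if the
formula contains the empty clause, and otherwise a node labelled by a
variable of the formula, with subtrees BSTs of the two simplifications. -/
inductive IsBST : CNF → BTree → Prop where
  | nil {F : CNF} : (∅ : Clause) ∈ F → IsBST F .nil
  | node {F : CNF} {x : Var} {l r : BTree} :
      (∅ : Clause) ∉ F → x ∈ CNF.vars F →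
      IsBST (restrict F x false) l → IsBST (restrict F x true) r →
      IsBST F (.node x l r)

/-- The minimal size of a backtracking search tree of `F`. -/
noncomputable def bstSize (F : CNF) : ℕ := sInf {n | ∃ T, IsBST F T ∧ T.size = n}

/-- `l ∨ F`: disjoin the literal `l` with every clause of `F`. -/
def ldisj (l : Lit) (F : CNF) : CNF := {C' | ∃ C ∈ F, C' = insert l C}

/-- The sum `F +ₓ H = (x ∨ F) ∪ (¬x ∨ H)`. -/
def fsum (x : Var) (F H : CNF) : CNF := ldisj (x, true) F ∪ ldisj (x, false) H

/-- The product `F · H = {γ ∨ δ | γ ∈ F, δ ∈ H}`. -/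
def fprod (F H : CNF) : CNF := {E | ∃ γ ∈ F, ∃ δ ∈ H, E = γ ∪ δ}

/-- Graft a copy of `T₂` at every empty-subtree position of `T₁`. -/
def BTree.graft : BTree → BTree → BTree
  | .nil, T₂ => T₂
  | .node x l r, T₂ => .node x (l.graft T₂) (r.graft T₂)

/-- `T` is a minimal-size backtracking search tree of `F`. -/
def OptimalBST (F : CNF) (T : BTree) : Prop :=
  IsBST F T ∧ ∀ T', IsBST F T' → T.size ≤ T'.size

section Aux

lemma clause_vars_subset {C : Clause} {F : CNF} (h : C ∈ F) :
    Clause.vars C ⊆ CNF.vars F := fun v hv =>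
  Set.mem_biUnion h hv

lemma lit_ne_of_notMem_vars {x : Var} {H : CNF} (hx : x ∉ CNF.vars H)
    {δ : Clause} (hδ : δ ∈ H) {l : Lit} (hl : l ∈ δ) : l.1 ≠ x := by
  rintro rfl
  exact hx (clause_vars_subset hδ ⟨l.2, hl⟩)

lemma empty_mem_fprod {F H : CNF} :
    (∅ : Clause) ∈ fprod F H ↔ (∅ : Clause) ∈ F ∧ (∅ : Clause) ∈ H := by
  constructor
  · rintro ⟨γ, hγ, δ, hδ, h⟩
    have hg : γ = ∅ := Set.eq_empty_of_subset_empty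
      (Set.subset_union_left.trans (le_of_eq h.symm))
    have hdd : δ = ∅ := Set.eq_empty_of_subset_empty
      (Set.subset_union_right.trans (le_of_eq h.symm))
    rw [hg] at hγ; rw [hdd] at hδ
    exact ⟨hγ, hδ⟩
  · rintro ⟨h1, h2⟩
    exact ⟨∅, h1, ∅, h2, by simp⟩

lemma vars_fprod_subset {F H : CNF} :
    CNF.vars (fprod F H) ⊆ CNF.vars F ∪ CNF.vars H := by
  intro v hv
  rcases Set.mem_iUnion₂.mp hv with ⟨E, hE, b, hb⟩
  rcases hE with ⟨γ, hγ, δ, hδ, rfl⟩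
  rcases hb with h | h
  · exact Or.inl (clause_vars_subset hγ ⟨b, h⟩)
  · exact Or.inr (clause_vars_subset hδ ⟨b, h⟩)

lemma mem_vars_fprod_left {F H : CNF} {x : Var} (hx : x ∈ CNF.vars F)
    (hne : H.Nonempty) : x ∈ CNF.vars (fprod F H) := by
  rcases Set.mem_iUnion₂.mp hx with ⟨γ, hγ, b, hb⟩
  rcases hne with ⟨δ, hδ⟩
  exact Set.mem_biUnion ⟨γ, hγ, δ, hδ, rfl⟩ ⟨b, Or.inl hb⟩

lemma fprod_comm (F H : CNF) : fprod F H = fprod H F := by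
  ext E
  constructor <;> rintro ⟨γ, hγ, δ, hδ, rfl⟩ <;>
    exact ⟨δ, hδ, γ, hγ, Set.union_comm _ _⟩

lemma mem_vars_fprod_right {F H : CNF} {x : Var} (hx : x ∈ CNF.vars H)
    (hne : F.Nonempty) : x ∈ CNF.vars (fprod F H) := by
  rw [fprod_comm]; exact mem_vars_fprod_left hx hne

lemma vars_restrict_subset {F : CNF} {x : Var} {b : Bool} :
    CNF.vars (restrict F x b) ⊆ CNF.vars F := by
  intro v hv
  rcases Set.mem_iUnion₂.mp hv with ⟨C', hC', c, hc⟩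
  rcases hC' with ⟨C, hC, _, rfl⟩
  exact clause_vars_subset hC ⟨c, hc.1⟩

lemma empty_mem_restrict {F : CNF} (h : (∅ : Clause) ∈ F) (x : Var) (b : Bool) :
    (∅ : Clause) ∈ restrict F x b := by
  refine ⟨∅, h, by simp, ?_⟩
  ext l; simp

lemma restrict_fprod_left {F H : CNF} {x : Var} (hx : x ∉ CNF.vars H) (b : Bool) :
    restrict (fprod F H) x b = fprod (restrict F x b) H := by
  ext C'
  constructor
  · rintro ⟨E, ⟨γ, hγ, δ, hδ, rfl⟩, hnb, rfl⟩
    refine ⟨{l ∈ γ | l.1 ≠ x}, ⟨γ, hγ, fun h => hnb (Or.inl h), rfl⟩, δ, hδ, ?_⟩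
    ext l
    simp only [Set.mem_setOf_eq, Set.mem_union, Set.mem_sep_iff]
    have hlx : ∀ l : Lit, l ∈ δ → l.1 ≠ x := fun l h => lit_ne_of_notMem_vars hx hδ h
    constructor
    · rintro ⟨h | h, hne⟩
      · exact Or.inl ⟨h, hne⟩
      · exact Or.inr h
    · rintro (⟨h, hne⟩ | h)
      · exact ⟨Or.inl h, hne⟩
      · exact ⟨Or.inr h, hlx l h⟩
  · rintro ⟨γ', ⟨γ, hγ, hnb, rfl⟩, δ, hδ, rfl⟩
    refine ⟨γ ∪ δ, ⟨γ, hγ, δ, hδ, rfl⟩, ?_, ?_⟩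
    · rintro (h | h)
      · exact hnb h
      · exact lit_ne_of_notMem_vars hx hδ h rfl
    · ext l
      simp only [Set.mem_setOf_eq, Set.mem_union, Set.mem_sep_iff]
      have hlx : ∀ l : Lit, l ∈ δ → l.1 ≠ x := fun l h => lit_ne_of_notMem_vars hx hδ h
      constructor
      · rintro (⟨h, hne⟩ | h)
        · exact ⟨Or.inl h, hne⟩
        · exact ⟨Or.inr h, hlx l h⟩
      · rintro ⟨h | h, hne⟩
        · exact Or.inl ⟨h, hne⟩
        · exact Or.inr h

lemma restrict_fprod_right {F H : CNF} {x : Var} (hx : x ∉ CNF.vars F) (b : Bool) :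
    restrict (fprod F H) x b = fprod F (restrict H x b) := by
  rw [fprod_comm, restrict_fprod_left hx, fprod_comm]

/-- bstSize is a lower bound. -/
lemma bstSize_le {F : CNF} {T : BTree} (h : IsBST F T) : bstSize F ≤ T.size :=
  Nat.sInf_le ⟨T, h, rfl⟩

lemma exists_optimal {F : CNF} (h : ∃ T, IsBST F T) :
    ∃ T, OptimalBST F T ∧ T.size = bstSize F := by
  have hne : {n | ∃ T, IsBST F T ∧ T.size = n}.Nonempty := by
    rcases h with ⟨T, hT⟩; exact ⟨T.size, T, hT, rfl⟩
  rcases Nat.sInf_mem hne with ⟨T, hT, hsize⟩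
  exact ⟨T, ⟨hT, fun T' hT' => hsize.trans_le (bstSize_le hT')⟩, hsize⟩

/-- From a BST of F·H one can extract BSTs of F and of H. -/
lemma exists_bst_pair (T : BTree) : ∀ F H : CNF,
    Disjoint (CNF.vars F) (CNF.vars H) → IsBST (fprod F H) T →
    (∃ S, IsBST F S) ∧ (∃ S, IsBST H S) := by
  induction T with
  | nil =>
    intro F H _ h
    cases h with
    | nil h =>
      rcases empty_mem_fprod.mp h with ⟨h1, h2⟩
      exact ⟨⟨.nil, .nil h1⟩, ⟨.nil, .nil h2⟩⟩
  | node y l r ihl ihr =>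
    intro F H hd h
    cases h with
    | node hne hy hl hr =>
      rcases vars_fprod_subset hy with hyF | hyH
      · have hyH : y ∉ CNF.vars H := Set.disjoint_left.mp hd hyF
        rw [restrict_fprod_left hyH] at hl hr
        have hd' : ∀ b, Disjoint (CNF.vars (restrict F y b)) (CNF.vars H) :=
          fun b => hd.mono_left vars_restrict_subset
        obtain ⟨⟨S1, hS1⟩, hH1⟩ := ihl _ _ (hd' false) hl
        obtain ⟨⟨S2, hS2⟩, _⟩ := ihr _ _ (hd' true) hr
        refine ⟨?_, hH1⟩
        by_cases hFe : (∅ : Clause) ∈ F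
        · exact ⟨.nil, .nil hFe⟩
        · exact ⟨.node y S1 S2, .node hFe hyF hS1 hS2⟩
      · have hyF : y ∉ CNF.vars F := Set.disjoint_right.mp hd hyH
        rw [restrict_fprod_right hyF] at hl hr
        have hd' : ∀ b, Disjoint (CNF.vars F) (CNF.vars (restrict H y b)) :=
          fun b => hd.mono_right vars_restrict_subset
        obtain ⟨hF1, ⟨S1, hS1⟩⟩ := ihl _ _ (hd' false) hl
        obtain ⟨_, ⟨S2, hS2⟩⟩ := ihr _ _ (hd' true) hr
        refine ⟨hF1, ?_⟩
        by_cases hHe : (∅ : Clause) ∈ H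
        · exact ⟨.nil, .nil hHe⟩
        · exact ⟨.node y S1 S2, .node hHe hyH hS1 hS2⟩

/-- Lower bound on the size of any BST of F·H. -/
lemma fprod_lower_bound (T : BTree) : ∀ F H : CNF,
    Disjoint (CNF.vars F) (CNF.vars H) → IsBST (fprod F H) T →
    bstSize F + (bstSize F + 1) * bstSize H ≤ T.size := by
  induction T with
  | nil =>
    intro F H _ h
    cases h with
    | nil h =>
      rcases empty_mem_fprod.mp h with ⟨h1, h2⟩
      have : bstSize F = 0 := Nat.le_zero.mp (bstSize_le (.nil h1))
      have h2' : bstSize H = 0 := Nat.le_zero.mp (bstSize_le (.nil h2))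
      simp [this, h2', BTree.size]
  | node y l r ihl ihr =>
    intro F H hd h
    cases h with
    | node hne hy hl hr =>
      rcases vars_fprod_subset hy with hyF | hyH
      · -- root is an F-variable
        have hyH : y ∉ CNF.vars H := Set.disjoint_left.mp hd hyF
        rw [restrict_fprod_left hyH] at hl hr
        have hd' : ∀ b, Disjoint (CNF.vars (restrict F y b)) (CNF.vars H) :=
          fun b => hd.mono_left vars_restrict_subset
        have hL := ihl _ _ (hd' false) hl
        have hR := ihr _ _ (hd' true) hr
        by_cases hFe : (∅ : Clause) ∈ F
        · have hF0 : bstSize F = 0 := Nat.le_zero.mp (bstSize_le (.nil hFe))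
          have : bstSize H ≤ l.size := le_trans (by nlinarith) hL
          simp only [hF0, BTree.size]
          omega
        · obtain ⟨⟨S1, hS1⟩, _⟩ := exists_bst_pair l _ _ (hd' false) hl
          obtain ⟨⟨S2, hS2⟩, _⟩ := exists_bst_pair r _ _ (hd' true) hr
          obtain ⟨O1, hO1, he1⟩ := exists_optimal ⟨S1, hS1⟩
          obtain ⟨O2, hO2, he2⟩ := exists_optimal ⟨S2, hS2⟩
          have hbF : bstSize F ≤ bstSize (restrict F y false) + bstSize (restrict F y true) + 1 := by
            have : IsBST F (.node y O1 O2) := .node hFe hyF hO1.1 hO2.1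
            have := bstSize_le this
            simp only [BTree.size] at this
            omega
          simp only [BTree.size]
          nlinarith [hL, hR, hbF, Nat.zero_le (bstSize H)]
      · -- root is an H-variable
        have hyF : y ∉ CNF.vars F := Set.disjoint_right.mp hd hyH
        rw [restrict_fprod_right hyF] at hl hr
        have hd' : ∀ b, Disjoint (CNF.vars F) (CNF.vars (restrict H y b)) :=
          fun b => hd.mono_right vars_restrict_subset
        have hL := ihl _ _ (hd' false) hl
        have hR := ihr _ _ (hd' true) hr
        by_cases hHe : (∅ : Clause) ∈ H
        · have hH0 : bstSize H = 0 := Nat.le_zero.mp (bstSize_le (.nil hHe))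
          simp only [hH0, BTree.size]
          have : bstSize F ≤ l.size := le_trans (by nlinarith) hL
          omega
        · obtain ⟨_, ⟨S1, hS1⟩⟩ := exists_bst_pair l _ _ (hd' false) hl
          obtain ⟨_, ⟨S2, hS2⟩⟩ := exists_bst_pair r _ _ (hd' true) hr
          obtain ⟨O1, hO1, he1⟩ := exists_optimal ⟨S1, hS1⟩
          obtain ⟨O2, hO2, he2⟩ := exists_optimal ⟨S2, hS2⟩
          have hbH : bstSize H ≤ bstSize (restrict H y false) + bstSize (restrict H y true) + 1 := by
            have : IsBST H (.node y O1 O2) := .node hHe hyH hO1.1 hO2.1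
            have := bstSize_le this
            simp only [BTree.size] at this
            omega
          simp only [BTree.size]
          nlinarith [hL, hR, hbH, Nat.zero_le (bstSize F)]

/-- If ∅ ∈ F, then a BST of H is a BST of F·H. -/
lemma isBST_fprod_of_empty (T : BTree) : ∀ F H : CNF,
    Disjoint (CNF.vars F) (CNF.vars H) → (∅ : Clause) ∈ F →
    IsBST H T → IsBST (fprod F H) T := by
  induction T with
  | nil =>
    intro F H _ hFe h
    cases h with
    | nil h => exact .nil (empty_mem_fprod.mpr ⟨hFe, h⟩)
  | node y l r ihl ihr =>
    intro F H hd hFe h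
    cases h with
    | node hne hy hl hr =>
      have hyF : y ∉ CNF.vars F := Set.disjoint_right.mp hd hy
      refine .node (fun hc => hne (empty_mem_fprod.mp hc).2)
        (mem_vars_fprod_right hy ⟨∅, hFe⟩) ?_ ?_
      · rw [restrict_fprod_right hyF]
        exact ihl _ _ (hd.mono_right vars_restrict_subset) hFe hl
      · rw [restrict_fprod_right hyF]
        exact ihr _ _ (hd.mono_right vars_restrict_subset) hFe hr

/-- Grafting a BST of H onto a BST of F gives a BST of F·H of the expected size. -/
lemma graft_isBST (S : BTree) : ∀ F : CNF, ∀ H : CNF, ∀ T : BTree,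
    Disjoint (CNF.vars F) (CNF.vars H) → H.Nonempty →
    IsBST F S → IsBST H T →
    IsBST (fprod F H) (S.graft T) ∧ (S.graft T).size = S.size + (S.size + 1) * T.size := by
  induction S with
  | nil =>
    intro F H T hd hne hS hT
    cases hS with
    | nil hFe =>
      refine ⟨isBST_fprod_of_empty T F H hd hFe hT, ?_⟩
      simp [BTree.graft, BTree.size]
  | node y l r ihl ihr =>
    intro F H T hd hne hS hT
    cases hS with
    | node hFe hy hl hr =>
      have hyH : y ∉ CNF.vars H := Set.disjoint_left.mp hd hy
      obtain ⟨hbl, hsl⟩ := ihl (restrict F y false) H T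
        (hd.mono_left vars_restrict_subset) hne hl hT
      obtain ⟨hbr, hsr⟩ := ihr (restrict F y true) H T
        (hd.mono_left vars_restrict_subset) hne hr hT
      constructor
      · refine .node (fun hc => hFe (empty_mem_fprod.mp hc).1)
          (mem_vars_fprod_left hy hne) ?_ ?_
        · rw [restrict_fprod_left hyH]; exact hbl
        · rw [restrict_fprod_left hyH]; exact hbr
      · simp only [BTree.graft, BTree.size, hsl, hsr]
        ring

lemma nonempty_of_unsat {F : CNF} (h : ¬ Sat F) : F.Nonempty := by
  rcases Set.eq_empty_or_nonempty F with rfl | hne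
  · exact absurd ⟨fun _ => true, fun C hC => absurd hC (Set.notMem_empty C)⟩ h
  · exact hne

end Aux

/-- An optimal BST of `F · H` whose root is labelled by a variable of `H` can
be transformed, without changing its size, into a search tree of `F · H` with
a single optimal BST of `F` at the top and all branching on `H`-variables
below it (i.e., an optimal BST of `H` grafted at every empty subtree of an
optimal BST of `F`). -/
theorem fprod_root_rearrange (F H : CNF)
    (hdisj : Disjoint (CNF.vars F) (CNF.vars H))
    (hF : ¬ Sat F) (hH : ¬ Sat H)
    (x : Var) (T₁ T₂ : BTree)
    (hopt : OptimalBST (fprod F H) (.node x T₁ T₂))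
    (hx : x ∈ CNF.vars H) :
    ∃ TF TH : BTree, OptimalBST F TF ∧ OptimalBST H TH ∧
      IsBST (fprod F H) (TF.graft TH) ∧
      (TF.graft TH).size = (BTree.node x T₁ T₂).size := by
  have hT : IsBST (fprod F H) (.node x T₁ T₂) := hopt.1
  obtain ⟨hexF, hexH⟩ := exists_bst_pair _ F H hdisj hT
  obtain ⟨TF, hTF, hsf⟩ := exists_optimal hexF
  obtain ⟨TH, hTH, hsh⟩ := exists_optimal hexH
  obtain ⟨hbst, hsize⟩ := graft_isBST TF F H TH hdisj (nonempty_of_unsat hH) hTF.1 hTH.1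
  have h1 := hopt.2 _ hbst
  have h2 := fprod_lower_bound (.node x T₁ T₂) F H hdisj hT
  rw [hsf, hsh] at hsize
  refine ⟨TF, TH, hTF, hTH, hbst, ?_⟩
  linarith
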